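/- arXiv:2510.27008 — 2 statements merged into one kernel-verified Lean document; each statement's English description precedes it below -/
import Mathlib

section
/- Any price profile (p_t^i) in the interior of the feasible region satisfying the first-order conditions (D_t^i - 2p_t^i + c_i) - Σ_{τ=t+1}^T (p_τ^i - c_i)·(N-1)/N = 0 for all i and all 1 ≤ t ≤ T, together with the demand recursions D_{t+1}^i = D_t^i - p_t^i + (1/N)Σ_j p_t^j, is a Nash equilibrium: no firm can increase its cumulative utility U_i = Σ_t (D_t^i - p_t^i)(p_t^i - c_i) by unilaterally changing its price vector. -/
/-!
A unilateral deviation `p_i + e` lowers every later own demand by `k Σ_{τ<t} e_τ`, where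
`k = (N-1)/N`, so `U_i(p_i + e) - U_i(p_i)` is a quadratic polynomial in `e`. Its linear part
`Σ_t e_t ∂U_i/∂p_t^i` vanishes by the first-order conditions, and its quadratic part
`-(k Σ_{τ<t} e_τ e_t + Σ_t e_t²) = -(k/2)(Σ_t e_t)² - (1 - k/2) Σ_t e_t²` is nonpositive because
`0 ≤ k ≤ 2`.
-/

/-- Demands of all `N` firms given the price profile `p : Fin N → ℕ → ℝ`:
`D_0^i = D1 i` and `D_{t+1}^i = D_t^i - p_t^i + (1/N)·Σ_j p_t^j`. -/
noncomputable def demand (N : ℕ) (D1 : Fin N → ℝ) (p : Fin N → ℕ → ℝ) (i : Fin N) : ℕ → ℝ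
  | 0 => D1 i
  | t + 1 => demand N D1 p i t - p i t + (∑ j, p j t) / (N : ℝ)

/-- Cumulative utility of firm `i` over horizon `T`. -/
noncomputable def utility (N T : ℕ) (D1 : Fin N → ℝ) (c : Fin N → ℝ)
    (p : Fin N → ℕ → ℝ) (i : Fin N) : ℝ :=
  ∑ t ∈ Finset.range T, (demand N D1 p i t - p i t) * (p i t - c i)

open Finset

lemma sq_sum_range_eq {R : Type*} [CommRing R] (e : ℕ → R) (n : ℕ) :
    (∑ t ∈ range n, e t) ^ 2
      = ∑ t ∈ range n, e t ^ 2 + 2 * ∑ t ∈ range n, e t * ∑ τ ∈ range t, e τ := by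
  induction n with
  | zero => simp
  | succ n ih =>
    simp only [sum_range_succ]
    linear_combination ih

lemma mul_sum_mul_sum_range_add_sum_sq_nonneg {R : Type*} [Field R] [LinearOrder R]
    [IsStrictOrderedRing R] {k : R} (hk₀ : 0 ≤ k) (hk₂ : k ≤ 2)
    (e : ℕ → R) (n : ℕ) :
    0 ≤ k * ∑ t ∈ range n, e t * ∑ τ ∈ range t, e τ + ∑ t ∈ range n, e t ^ 2 := by
  have hsq := sq_sum_range_eq e n
  have hE : 0 ≤ ∑ t ∈ range n, e t ^ 2 := sum_nonneg fun t _ => sq_nonneg (e t)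
  nlinarith [mul_nonneg hk₀ (sq_nonneg (∑ t ∈ range n, e t)), mul_nonneg (sub_nonneg.mpr hk₂) hE]

lemma sum_range_mul_sum_range_eq_sum_mul_sum_Ioo {R : Type*} [CommSemiring R]
    (f g : ℕ → R) (n : ℕ) :
    ∑ t ∈ range n, g t * ∑ τ ∈ range t, f τ = ∑ t ∈ range n, f t * ∑ τ ∈ Ioo t n, g τ := by
  simp only [mul_sum]
  rw [sum_comm' (t' := range n) (s' := fun τ => Ioo τ n)
    (by intro t τ; simp only [mem_range, mem_Ioo]; omega)]
  exact sum_congr rfl fun τ _ => sum_congr rfl fun t _ => mul_comm _ _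

lemma natCast_sub_one_div_nonneg (N : ℕ) : 0 ≤ ((N : ℝ) - 1) / N := by
  rcases N.eq_zero_or_pos with rfl | hN
  · simp
  · exact div_nonneg (sub_nonneg.mpr (by exact_mod_cast hN)) N.cast_nonneg

lemma natCast_sub_one_div_le_one (N : ℕ) : ((N : ℝ) - 1) / N ≤ 1 :=
  div_le_one_of_le₀ (by linarith) N.cast_nonneg

lemma sum_update_apply {ι α M : Type*} [Fintype ι] [DecidableEq ι] [AddCommGroup M]
    (p : ι → α → M) (i : ι) (q : α → M) (t : α) :
    ∑ j, Function.update p i q j t = ∑ j, p j t + (q t - p i t) := by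
  have h : ∀ j, Function.update p i q j t = p j t + (Pi.single i (q t - p i t) : ι → M) j := by
    intro j
    rcases eq_or_ne j i with rfl | hj <;> simp [Function.update_of_ne, *]
  simp only [h, sum_add_distrib, sum_pi_single', mem_univ, if_true]

lemma demand_update_self {N : ℕ} (D1 : Fin N → ℝ) (p : Fin N → ℕ → ℝ) (i : Fin N)
    (q : ℕ → ℝ) (t : ℕ) :
    demand N D1 (Function.update p i q) i t
      = demand N D1 p i t - ((N : ℝ) - 1) / N * ∑ τ ∈ range t, (q τ - p i τ) := by
  have hN : (N : ℝ) ≠ 0 := Nat.cast_ne_zero.mpr i.pos.ne'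
  induction t with
  | zero => simp [demand]
  | succ t ih =>
    rw [demand, demand, ih, sum_update_apply, Function.update_self, sum_range_succ]
    field_simp
    ring

/-- The partial derivative `∂U_i/∂p_t^i`, the left-hand side of the first-order condition. -/
noncomputable def marginalUtility (N T : ℕ) (D1 c : Fin N → ℝ) (p : Fin N → ℕ → ℝ)
    (i : Fin N) (t : ℕ) : ℝ :=
  (demand N D1 p i t - 2 * p i t + c i) -
    ∑ τ ∈ Ioo t T, (p i τ - c i) * (((N : ℝ) - 1) / N)

lemma utility_update_self_sub_utility (N T : ℕ) (D1 c : Fin N → ℝ) (p : Fin N → ℕ → ℝ)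
    (i : Fin N) (q : ℕ → ℝ) :
    utility N T D1 c (Function.update p i q) i - utility N T D1 c p i
      = ∑ t ∈ range T, (q t - p i t) * marginalUtility N T D1 c p i t
        - (((N : ℝ) - 1) / N * ∑ t ∈ range T, (q t - p i t) * ∑ τ ∈ range t, (q τ - p i τ)
          + ∑ t ∈ range T, (q t - p i t) ^ 2) := by
  simp only [utility, marginalUtility, ← sum_sub_distrib]
  set k : ℝ := ((N : ℝ) - 1) / N
  set e : ℕ → ℝ := fun t => q t - p i t
  have hterm : ∀ t, (demand N D1 (Function.update p i q) i t - Function.update p i q i t)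
        * (Function.update p i q i t - c i) - (demand N D1 p i t - p i t) * (p i t - c i)
      = e t * (demand N D1 p i t - 2 * p i t + c i) - (p i t - c i) * k * ∑ τ ∈ range t, e τ
        - k * (e t * ∑ τ ∈ range t, e τ) - e t ^ 2 := by
    intro t
    rw [demand_update_self, Function.update_self]
    ring
  have hswap := sum_range_mul_sum_range_eq_sum_mul_sum_Ioo e (fun t => (p i t - c i) * k) T
  rw [sum_congr rfl fun t _ => hterm t]
  simp only [mul_sub, sum_sub_distrib, ← mul_sum]
  linear_combination -hswap

theorem foc_implies_nash_general (N T : ℕ)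
    (D1 c : Fin N → ℝ) (p : Fin N → ℕ → ℝ)
    (hfoc : ∀ i, ∀ t < T,
      (demand N D1 p i t - 2 * p i t + c i) -
        ∑ τ ∈ Finset.Ioo t T, (p i τ - c i) * (((N : ℝ) - 1) / N) = 0) :
    ∀ i : Fin N, ∀ q : ℕ → ℝ,
      utility N T D1 c (Function.update p i q) i ≤ utility N T D1 c p i := by
  intro i q
  have hlinear : ∑ t ∈ range T, (q t - p i t) * marginalUtility N T D1 c p i t = 0 :=
    sum_eq_zero fun t ht => by rw [marginalUtility, hfoc i t (mem_range.mp ht), mul_zero]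
  have hquadratic := mul_sum_mul_sum_range_add_sum_sq_nonneg (natCast_sub_one_div_nonneg N)
    (by linarith [natCast_sub_one_div_le_one N]) (fun t => q t - p i t) T
  linarith [utility_update_self_sub_utility N T D1 c p i q]

/-- Any price profile in the interior of the feasible region satisfying the
first-order conditions is a Nash equilibrium: no firm can increase its
cumulative utility by unilaterally changing its price vector. -/
theorem foc_implies_nash (N T : ℕ) (hN : 0 < N)
    (D1 c : Fin N → ℝ) (pmax : ℝ) (p : Fin N → ℕ → ℝ)
    (hinterior : ∀ i, ∀ t < T, c i < p i t ∧ p i t < pmax)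
    (hfeas : ∀ i, ∀ t ≤ T, 0 ≤ demand N D1 p i t)
    (hfoc : ∀ i, ∀ t < T,
      (demand N D1 p i t - 2 * p i t + c i) -
        ∑ τ ∈ Finset.Ioo t T, (p i τ - c i) * (((N : ℝ) - 1) / N) = 0) :
    ∀ i : Fin N, ∀ q : ℕ → ℝ,
      utility N T D1 c (Function.update p i q) i ≤ utility N T D1 c p i :=
  foc_implies_nash_general N T D1 c p hfoc
end

section
/- For T = 2, N firms, costs c_i, and initial demands D_1^i, the system of first-order conditions D_1^i - 2p_1^i + c_i - (p_2^i - c_i)(N-1)/N = 0 and D_2^i - 2p_2^i + c_i = 0 with D_2^i = D_1^i - p_1^i + (1/N)Σ_j p_1^j has the explicit per-firm relation p_2^i = (D_2^i + c_i)/2, and substituting yields a linear system in the first-period prices (p_1^1,...,p_1^N) whose coefficient matrix is invertible, so the no-observation equilibrium candidate is unique. -/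
/-!
The system is affine in `(p₁, p₂)`, so it suffices that the difference `(u, v)` of two solutions,
which solves the homogeneous system `2uᵢ + a vᵢ = 0`, `uᵢ + 2vᵢ = ū` (`ū` the mean of `u`, `a = (N - 1)/N`), vanishes.
Summing the second equation over the firms gives `∑ v = 0` (deviations from a mean sum to zero),
and then the first gives `∑ u = 0`. The mean term is gone, so each firm is left with a `2 × 2`
system of determinant `4 - a`, which is nonzero because `a ≤ 1`.
-/

open Finset

theorem sum_const_sum_div_card {ι K : Type*} [Fintype ι] [Field K] [CharZero K] (u : ι → K) :
    ∑ _i : ι, (∑ j, u j) / Fintype.card ι = ∑ j, u j := by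
  cases isEmpty_or_nonempty ι
  · simp
  · rw [sum_const, card_univ, nsmul_eq_mul, mul_div_cancel₀ _ (by simp)]

theorem eq_zero_of_mean_coupled_system {ι K : Type*} [Fintype ι] [Field K] [CharZero K]
    {a : K} (ha : a ≠ 4) {u v : ι → K} (h₁ : ∀ i, 2 * u i + a * v i = 0)
    (h₂ : ∀ i, u i + 2 * v i = (∑ j, u j) / Fintype.card ι) : u = 0 ∧ v = 0 := by
  have hv_sum : ∑ j, v j = 0 := by
    have := sum_congr rfl fun i (_ : i ∈ univ) => h₂ i
    rw [sum_add_distrib, ← mul_sum, sum_const_sum_div_card] at this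
    simpa using this
  have hu_sum : ∑ j, u j = 0 := by
    have := sum_congr rfl fun i (_ : i ∈ univ) => h₁ i
    rw [sum_add_distrib, ← mul_sum, ← mul_sum, hv_sum] at this
    simpa using this
  have hv : ∀ i, v i = 0 := fun i => by
    have hdet : (a - 4) * v i = 0 := by
      linear_combination h₁ i - 2 * h₂ i - 2 * (hu_sum / Fintype.card ι)
    exact (mul_eq_zero.mp hdet).resolve_left (sub_ne_zero.mpr ha)
  refine ⟨funext fun i => ?_, funext hv⟩
  show u i = 0
  linear_combination h₂ i + hu_sum / Fintype.card ι - 2 * hv i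

theorem natCast_sub_one_div_self_ne_four (N : ℕ) : ((N : ℝ) - 1) / N ≠ 4 :=
  ((div_le_one_of_le₀ (by linarith) N.cast_nonneg).trans_lt (by norm_num)).ne

theorem two_period_unique_candidate_general (N : ℕ)
    (c D1 : Fin N → ℝ) :
    (∀ p1 p2 : Fin N → ℝ,
      (∀ i, D1 i - 2 * p1 i + c i - (p2 i - c i) * (((N : ℝ) - 1) / N) = 0) →
      (∀ i, (D1 i - p1 i + (∑ j, p1 j) / (N : ℝ)) - 2 * p2 i + c i = 0) →
      ∀ i, p2 i = ((D1 i - p1 i + (∑ j, p1 j) / (N : ℝ)) + c i) / 2) ∧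
    (∀ p1 p2 q1 q2 : Fin N → ℝ,
      (∀ i, D1 i - 2 * p1 i + c i - (p2 i - c i) * (((N : ℝ) - 1) / N) = 0) →
      (∀ i, (D1 i - p1 i + (∑ j, p1 j) / (N : ℝ)) - 2 * p2 i + c i = 0) →
      (∀ i, D1 i - 2 * q1 i + c i - (q2 i - c i) * (((N : ℝ) - 1) / N) = 0) →
      (∀ i, (D1 i - q1 i + (∑ j, q1 j) / (N : ℝ)) - 2 * q2 i + c i = 0) →
      p1 = q1 ∧ p2 = q2) := by
  refine ⟨fun p1 p2 _ h₂ i => by linear_combination -h₂ i / 2, ?_⟩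
  intro p1 p2 q1 q2 hp₁ hp₂ hq₁ hq₂
  have hmean : ∑ j, (p1 - q1) j = ∑ j, p1 j - ∑ j, q1 j := sum_sub_distrib p1 q1
  have hdiff := eq_zero_of_mean_coupled_system (natCast_sub_one_div_self_ne_four N)
    (u := p1 - q1) (v := p2 - q2)
    (fun i => by simp only [Pi.sub_apply]; linear_combination hq₁ i - hp₁ i)
    (fun i => by
      rw [hmean, Fintype.card_fin]
      simp only [Pi.sub_apply]
      linear_combination hq₂ i - hp₂ i)
  exact ⟨sub_eq_zero.mp hdiff.1, sub_eq_zero.mp hdiff.2⟩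

/-- For `T = 2`, the first-order conditions
`D_1^i - 2p_1^i + c_i - (p_2^i - c_i)(N-1)/N = 0`, `D_2^i - 2p_2^i + c_i = 0`
with `D_2^i = D_1^i - p_1^i + (1/N)Σ_j p_1^j` imply
`p_2^i = (D_2^i + c_i)/2`, and the solution is unique. -/
theorem two_period_unique_candidate (N : ℕ) (hN : 0 < N)
    (c D1 : Fin N → ℝ) :
    (∀ p1 p2 : Fin N → ℝ,
      (∀ i, D1 i - 2 * p1 i + c i - (p2 i - c i) * (((N : ℝ) - 1) / N) = 0) →
      (∀ i, (D1 i - p1 i + (∑ j, p1 j) / (N : ℝ)) - 2 * p2 i + c i = 0) →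
      ∀ i, p2 i = ((D1 i - p1 i + (∑ j, p1 j) / (N : ℝ)) + c i) / 2) ∧
    (∀ p1 p2 q1 q2 : Fin N → ℝ,
      (∀ i, D1 i - 2 * p1 i + c i - (p2 i - c i) * (((N : ℝ) - 1) / N) = 0) →
      (∀ i, (D1 i - p1 i + (∑ j, p1 j) / (N : ℝ)) - 2 * p2 i + c i = 0) →
      (∀ i, D1 i - 2 * q1 i + c i - (q2 i - c i) * (((N : ℝ) - 1) / N) = 0) →
      (∀ i, (D1 i - q1 i + (∑ j, q1 j) / (N : ℝ)) - 2 * q2 i + c i = 0) →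
      p1 = q1 ∧ p2 = q2) :=
  two_period_unique_candidate_general N c D1
end
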